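/- arXiv:2510.21560 — 4 statements merged into one kernel-verified Lean document; each statement's English description precedes it below -/
import Mathlib

section
/- Let B : ℝ^n → ℝ be continuously differentiable, let α : ℝ → ℝ be an extended class-K∞ function, and let x : ℝ → ℝ^n be a differentiable curve whose derivative at each time t ≥ 0 is x'(t). Suppose that for every t ≥ 0 the directional derivative of B along the trajectory satisfies (dB(x(t)))(x'(t)) ≥ -α(B(x(t))). If B(x(0)) ≥ 0, then B(x(t)) ≥ 0 for all t ≥ 0; that is, the zero-superlevel set {x : B(x) ≥ 0} is forward invariant along the trajectory. -/
/-! Along the trajectory, `f t = B (x t)` satisfies `f' ≥ -α (f) > 0` wherever `f < 0`, so `f` is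
strictly increasing whenever it is negative and cannot cross below `0`. Formally, the fencing
theorem `image_le_of_deriv_right_lt_deriv_boundary` keeps `-f` below every constant `ε > 0`. -/

theorem nonneg_of_hasDerivAt_pos_of_neg {f f' : ℝ → ℝ} {a : ℝ}
    (hf : ∀ t, a ≤ t → HasDerivAt f (f' t) t) (hpos : ∀ t, a ≤ t → f t < 0 → 0 < f' t)
    (ha : 0 ≤ f a) : ∀ t, a ≤ t → 0 ≤ f t := by
  intro T hT
  have hneg_le : ∀ ε, 0 < ε → -f T ≤ ε := fun ε hε =>
    image_le_of_deriv_right_lt_deriv_boundary (f := fun t => -f t) (f' := fun t => -f' t)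
      (B := fun _ => ε) (B' := fun _ => 0)
      (fun t ht => (hf t ht.1).continuousAt.neg.continuousWithinAt)
      (fun t ht => (hf t ht.1).neg.hasDerivWithinAt) (by linarith)
      (fun _ => hasDerivAt_const _ _)
      (fun t ht hft => by linarith [hpos t ht.1 (by linarith)]) ⟨hT, le_rfl⟩
  exact neg_nonpos.mp (le_of_forall_gt_imp_ge_of_dense hneg_le)

theorem cbf_forward_invariance_general {n : ℕ}
    (B : EuclideanSpace ℝ (Fin n) → ℝ) (hB : ContDiff ℝ 1 B)
    (α : ℝ → ℝ) (hα_mono : StrictMono α) (hα_zero : α 0 = 0)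
    (x x' : ℝ → EuclideanSpace ℝ (Fin n))
    (hx : ∀ t : ℝ, 0 ≤ t → HasDerivAt x (x' t) t)
    (hineq : ∀ t : ℝ, 0 ≤ t → fderiv ℝ B (x t) (x' t) ≥ -α (B (x t)))
    (h0 : B (x 0) ≥ 0) :
    ∀ t : ℝ, 0 ≤ t → B (x t) ≥ 0 := by
  have hderiv : ∀ t, 0 ≤ t → HasDerivAt (B ∘ x) (fderiv ℝ B (x t) (x' t)) t := fun t ht =>
    ((hB.differentiable one_ne_zero) (x t)).hasFDerivAt.comp_hasDerivAt t (hx t ht)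
  have hpos : ∀ t, 0 ≤ t → B (x t) < 0 → 0 < fderiv ℝ B (x t) (x' t) := fun t ht hneg => by
    have hα_neg : α (B (x t)) < 0 := hα_zero ▸ hα_mono hneg
    linarith [hineq t ht]
  exact nonneg_of_hasDerivAt_pos_of_neg hderiv hpos h0

/-- Forward invariance of the zero-superlevel set of a continuously
differentiable barrier function `B` along a trajectory satisfying the CBF inequality
with an extended class-K∞ comparison function `α`. -/
theorem cbf_forward_invariance {n : ℕ}
    (B : EuclideanSpace ℝ (Fin n) → ℝ) (hB : ContDiff ℝ 1 B)
    (α : ℝ → ℝ) (hα_cont : Continuous α) (hα_mono : StrictMono α) (hα_zero : α 0 = 0)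
    (x x' : ℝ → EuclideanSpace ℝ (Fin n))
    (hx : ∀ t : ℝ, 0 ≤ t → HasDerivAt x (x' t) t)
    (hineq : ∀ t : ℝ, 0 ≤ t → fderiv ℝ B (x t) (x' t) ≥ -α (B (x t)))
    (h0 : B (x 0) ≥ 0) :
    ∀ t : ℝ, 0 ≤ t → B (x t) ≥ 0 :=
  cbf_forward_invariance_general B hB α hα_mono hα_zero x x' hx hineq h0
end

section
/- Let α : ℝ → ℝ be an extended class-K∞ function and let y : ℝ → ℝ be differentiable with y'(t) ≥ -α(y(t)) for all t ≥ 0. If y(0) ≥ 0, then y(t) ≥ 0 for all t ≥ 0. -/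
open Set

theorem nonneg_of_deriv_nonneg_where_neg {y : ℝ → ℝ} {a b : ℝ} (hab : a ≤ b)
    (hcont : ContinuousOn y (Icc a b)) (hdiff : DifferentiableOn ℝ y (Ioo a b))
    (ha : 0 ≤ y a) (hderiv : ∀ t ∈ Ioo a b, y t < 0 → 0 ≤ deriv y t) : 0 ≤ y b := by
  -- `s` is the last time in `[a, b]` at which `y` is nonnegative
  have hclosed : IsClosed (Icc a b ∩ y ⁻¹' Ici 0) :=
    hcont.preimage_isClosed_of_isClosed isClosed_Icc isClosed_Ici
  obtain ⟨s, ⟨⟨has, hsb⟩, hys⟩, hlast⟩ :=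
    (isCompact_Icc.of_isClosed_subset hclosed inter_subset_left).exists_isGreatest
      ⟨a, ⟨left_mem_Icc.2 hab, ha⟩⟩
  have hneg : ∀ t ∈ Ioo s b, y t < 0 := fun t ⟨hst, htb⟩ =>
    lt_of_not_ge fun hyt => (hlast ⟨⟨has.trans hst.le, htb.le⟩, hyt⟩).not_gt hst
  have hmono : MonotoneOn y (Icc s b) := by
    have hsub : Ioo s b ⊆ Ioo a b := Ioo_subset_Ioo_left has
    refine monotoneOn_of_deriv_nonneg (convex_Icc s b)
      (hcont.mono (Icc_subset_Icc_left has)) ?_ ?_ <;> rw [interior_Icc]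
    · exact hdiff.mono hsub
    · exact fun t ht => hderiv t (hsub ht) (hneg t ht)
  exact hys.trans (hmono (left_mem_Icc.2 hsb) (right_mem_Icc.2 hsb) hsb)

theorem scalar_comparison_classK_general
    (α : ℝ → ℝ) (hα_mono : StrictMono α) (hα_zero : α 0 = 0)
    (y : ℝ → ℝ) (hy : Differentiable ℝ y)
    (hineq : ∀ t : ℝ, 0 ≤ t → deriv y t ≥ -α (y t))
    (h0 : y 0 ≥ 0) :
    ∀ t : ℝ, 0 ≤ t → y t ≥ 0 := by
  intro t ht
  refine nonneg_of_deriv_nonneg_where_neg ht hy.continuous.continuousOn hy.differentiableOn h0 ?_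
  intro s hs hys
  have hα_nonpos : α (y s) ≤ 0 := hα_zero ▸ hα_mono.monotone hys.le
  linarith [hineq s hs.1.le]

/-- Scalar comparison lemma: if `y` is differentiable with
`y'(t) ≥ -α (y t)` for all `t ≥ 0`, where `α` is an extended class-K∞ function,
and `y 0 ≥ 0`, then `y t ≥ 0` for all `t ≥ 0`. -/
theorem scalar_comparison_classK
    (α : ℝ → ℝ) (hα_cont : Continuous α) (hα_mono : StrictMono α) (hα_zero : α 0 = 0)
    (y : ℝ → ℝ) (hy : Differentiable ℝ y)
    (hineq : ∀ t : ℝ, 0 ≤ t → deriv y t ≥ -α (y t))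
    (h0 : y 0 ≥ 0) :
    ∀ t : ℝ, 0 ≤ t → y t ≥ 0 :=
  scalar_comparison_classK_general α hα_mono hα_zero y hy hineq h0
end

section
/- Let r > 0, let α : ℝ → ℝ be an extended class-K∞ function, and let x : ℝ → ℝ² be a differentiable curve in the Euclidean plane with derivative u(t) = x'(t) (the single-integrator system ẋ = u). Suppose ‖x(0)‖² ≥ r², and that for every t ≥ 0 the control satisfies the CBF inequality 2⟪x(t), u(t)⟫ ≥ -α(‖x(t)‖² - r²). Then ‖x(t)‖ ≥ r for all t ≥ 0; i.e., the trajectory never enters the open disk of radius r centered at the origin. -/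
open scoped RealInnerProductSpace

/-!
Along the trajectory, `B t = ‖x t‖² - r²` has derivative `2⟪x t, u t⟫ ≥ -α (B t)`, which is
nonnegative wherever `B t < 0`. A function that can only increase while it is negative never
becomes negative, so `B` stays nonnegative from `B 0 ≥ 0`.
-/

open Set

-- After the last time `s ≤ b` with `0 ≤ B s`, `B` is negative, hence monotone, on `[s, b]`.
theorem nonneg_of_hasDerivAt_nonneg_of_neg {B B' : ℝ → ℝ} {a b : ℝ} (hab : a ≤ b)
    (hcont : ContinuousOn B (Icc a b)) (hderiv : ∀ t ∈ Ioo a b, HasDerivAt B (B' t) t)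
    (ha : 0 ≤ B a) (hneg : ∀ t ∈ Ioo a b, B t < 0 → 0 ≤ B' t) : 0 ≤ B b := by
  by_contra! hb
  have hclosed : IsClosed (Icc a b ∩ B ⁻¹' Ici 0) :=
    hcont.preimage_isClosed_of_isClosed isClosed_Icc isClosed_Ici
  obtain ⟨s, ⟨⟨has, hsb⟩, hBs⟩, hlast⟩ :=
    (isCompact_Icc.of_isClosed_subset hclosed inter_subset_left).exists_isGreatest
      ⟨a, mem_inter (left_mem_Icc.2 hab) ha⟩
  rw [mem_preimage, mem_Ici] at hBs
  have hneg_after : ∀ t ∈ Ioc s b, B t < 0 := fun t ⟨hst, htb⟩ => by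
    by_contra! hBt
    exact (hlast (mem_inter ⟨has.trans hst.le, htb⟩ hBt)).not_gt hst
  have hsub : Icc s b ⊆ Icc a b := Icc_subset_Icc_left has
  have hmono : MonotoneOn B (Icc s b) := by
    refine monotoneOn_of_hasDerivWithinAt_nonneg (f' := B') (convex_Icc s b) (hcont.mono hsub)
      (fun t ht => ?_) (fun t ht => ?_) <;> rw [interior_Icc] at ht
    · exact (hderiv t ⟨has.trans_lt ht.1, ht.2⟩).hasDerivWithinAt
    · exact hneg t ⟨has.trans_lt ht.1, ht.2⟩ (hneg_after t (Ioo_subset_Ioc_self ht))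
  have hsb_lt : s < b := hsb.lt_of_ne (by rintro rfl; exact hb.not_ge hBs)
  exact (hneg_after b ⟨hsb_lt, le_rfl⟩).not_ge (hBs.trans (hmono ⟨le_rfl, hsb⟩ ⟨hsb, le_rfl⟩ hsb))

theorem single_integrator_obstacle_avoidance_general (r : ℝ)
    (α : ℝ → ℝ) (hα_mono : StrictMono α) (hα_zero : α 0 = 0)
    (x u : ℝ → EuclideanSpace ℝ (Fin 2))
    (hx : ∀ t : ℝ, 0 ≤ t → HasDerivAt x (u t) t)
    (h0 : ‖x 0‖ ^ 2 ≥ r ^ 2)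
    (hineq : ∀ t : ℝ, 0 ≤ t → 2 * ⟪x t, u t⟫ ≥ -α (‖x t‖ ^ 2 - r ^ 2)) :
    ∀ t : ℝ, 0 ≤ t → ‖x t‖ ≥ r := by
  intro t ht
  have hB : ∀ s, 0 ≤ s → HasDerivAt (fun s => ‖x s‖ ^ 2 - r ^ 2) (2 * ⟪x s, u s⟫) s :=
    fun s hs => (hx s hs).norm_sq.sub_const _
  have hBt : 0 ≤ ‖x t‖ ^ 2 - r ^ 2 := by
    refine nonneg_of_hasDerivAt_nonneg_of_neg (B := fun s => ‖x s‖ ^ 2 - r ^ 2) ht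
      (fun s hs => (hB s hs.1).continuousAt.continuousWithinAt)
      (fun s hs => hB s hs.1.le) (sub_nonneg.2 h0) (fun s hs hBs => ?_)
    have hα_neg : α (‖x s‖ ^ 2 - r ^ 2) < 0 := hα_zero ▸ hα_mono hBs
    linarith [hineq s hs.1.le]
  exact le_of_pow_le_pow_left₀ two_ne_zero (norm_nonneg _) (sub_nonneg.1 hBt)

/-- Single-integrator obstacle avoidance: with `B(x) = ‖x‖² - r²`
as barrier function, if the CBF inequality `2⟪x t, u t⟫ ≥ -α (‖x t‖² - r²)` holds
along the trajectory `ẋ = u` and `‖x 0‖² ≥ r²`, then `‖x t‖ ≥ r` for all `t ≥ 0`. -/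
theorem single_integrator_obstacle_avoidance (r : ℝ) (hr : 0 < r)
    (α : ℝ → ℝ) (hα_cont : Continuous α) (hα_mono : StrictMono α) (hα_zero : α 0 = 0)
    (x u : ℝ → EuclideanSpace ℝ (Fin 2))
    (hx : ∀ t : ℝ, 0 ≤ t → HasDerivAt x (u t) t)
    (h0 : ‖x 0‖ ^ 2 ≥ r ^ 2)
    (hineq : ∀ t : ℝ, 0 ≤ t → 2 * ⟪x t, u t⟫ ≥ -α (‖x t‖ ^ 2 - r ^ 2)) :
    ∀ t : ℝ, 0 ≤ t → ‖x t‖ ≥ r :=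
  single_integrator_obstacle_avoidance_general r α hα_mono hα_zero x u hx h0 hineq
end

section
/- Let B : ℝ^n → ℝ be continuously differentiable, let α : ℝ → ℝ be an extended class-K∞ function, let Fail ⊆ ℝ^n be a set disjoint from the zero-superlevel set {x : B(x) ≥ 0}, and let x : ℝ → ℝ^n be a differentiable trajectory with B(x(0)) ≥ 0 such that for every t ≥ 0, (dB(x(t)))(x'(t)) ≥ -α(B(x(t))). Then x(t) ∉ Fail for all t ≥ 0. -/
/-!
Along the trajectory, `g = B ∘ x` has `g' ≥ -α (g) ≥ 0` wherever `g < 0`. If `g x ≥ 0` and `g` were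
negative on all of `(x, y]`, then `g` would be monotone on `[x, y]`, forcing `g y ≥ g x ≥ 0`; a
closed-set continuation argument along `[0, t]` therefore keeps `g ≥ 0`.
-/

open Set

theorem nonneg_of_deriv_nonneg_of_neg {g g' : ℝ → ℝ} {a : ℝ}
    (hg : ∀ t, a ≤ t → HasDerivAt g (g' t) t) (ha : 0 ≤ g a)
    (hg' : ∀ t, a ≤ t → g t < 0 → 0 ≤ g' t) :
    ∀ t, a ≤ t → 0 ≤ g t := by
  have hcont : ContinuousOn g (Ici a) := fun t ht => (hg t ht).continuousAt.continuousWithinAt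
  intro b hb
  suffices Icc a b ⊆ {t | 0 ≤ g t} from this ⟨hb, le_rfl⟩
  refine IsClosed.Icc_subset_of_forall_exists_gt ?_ ha ?_
  · rw [inter_comm]
    exact (hcont.mono Icc_subset_Ici_self).preimage_isClosed_of_isClosed isClosed_Icc isClosed_Ici
  · rintro x ⟨hgx, hax, -⟩ y (hxy : x < y)
    by_contra hnone
    have hneg : ∀ z ∈ Ioc x y, g z < 0 := fun z hz => not_le.mp fun h => hnone ⟨z, h, hz⟩
    have hax' : ∀ t ∈ Icc x y, a ≤ t := fun t ht => hax.trans ht.1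
    have hmono : MonotoneOn g (Icc x y) := by
      refine monotoneOn_of_deriv_nonneg (convex_Icc x y) (hcont.mono hax') ?_ ?_ <;>
        intro t ht <;> rw [interior_Icc] at ht
      · exact (hg t (hax' t (Ioo_subset_Icc_self ht))).differentiableAt.differentiableWithinAt
      · rw [(hg t (hax' t (Ioo_subset_Icc_self ht))).deriv]
        exact hg' t (hax' t (Ioo_subset_Icc_self ht)) (hneg t (Ioo_subset_Ioc_self ht))
    have hxy' := hxy.le
    exact (hgx.trans (hmono (left_mem_Icc.mpr hxy') (right_mem_Icc.mpr hxy') hxy')).not_gt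
      (hneg y (right_mem_Ioc.mpr hxy))

theorem cbf_forward_invariant {E : Type*} [NormedAddCommGroup E] [NormedSpace ℝ E]
    {B : E → ℝ} (hB : Differentiable ℝ B) {α : ℝ → ℝ} (hα : ∀ r < 0, α r ≤ 0)
    {x x' : ℝ → E} (hx : ∀ t, 0 ≤ t → HasDerivAt x (x' t) t) (h0 : 0 ≤ B (x 0))
    (hineq : ∀ t, 0 ≤ t → -α (B (x t)) ≤ fderiv ℝ B (x t) (x' t)) :
    ∀ t, 0 ≤ t → 0 ≤ B (x t) :=
  nonneg_of_deriv_nonneg_of_neg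
    (fun t ht => (hB (x t)).hasFDerivAt.comp_hasDerivAt t (hx t ht)) h0
    fun t ht hneg => (neg_nonneg.mpr (hα _ hneg)).trans (hineq t ht)

theorem cbf_safety_filter_general {n : ℕ}
    (B : EuclideanSpace ℝ (Fin n) → ℝ) (hB : ContDiff ℝ 1 B)
    (α : ℝ → ℝ) (hα_mono : StrictMono α) (hα_zero : α 0 = 0)
    (Fail : Set (EuclideanSpace ℝ (Fin n)))
    (hFail : Disjoint Fail {x : EuclideanSpace ℝ (Fin n) | B x ≥ 0})
    (x x' : ℝ → EuclideanSpace ℝ (Fin n))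
    (hx : ∀ t : ℝ, 0 ≤ t → HasDerivAt x (x' t) t)
    (h0 : B (x 0) ≥ 0)
    (hineq : ∀ t : ℝ, 0 ≤ t → fderiv ℝ B (x t) (x' t) ≥ -α (B (x t))) :
    ∀ t : ℝ, 0 ≤ t → x t ∉ Fail := by
  have hα_neg : ∀ r < 0, α r ≤ 0 := fun r hr => hα_zero ▸ (hα_mono hr).le
  have hsafe := cbf_forward_invariant (hB.differentiable one_ne_zero) hα_neg hx h0 hineq
  exact fun t ht hfail => disjoint_left.mp hFail hfail (hsafe t ht)

/-- Safety of the CBF filter: if the failure set is disjoint from the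
zero-superlevel set `{x : B x ≥ 0}` and a trajectory starting in that set satisfies
the CBF inequality, then the trajectory never enters the failure set. -/
theorem cbf_safety_filter {n : ℕ}
    (B : EuclideanSpace ℝ (Fin n) → ℝ) (hB : ContDiff ℝ 1 B)
    (α : ℝ → ℝ) (hα_cont : Continuous α) (hα_mono : StrictMono α) (hα_zero : α 0 = 0)
    (Fail : Set (EuclideanSpace ℝ (Fin n)))
    (hFail : Disjoint Fail {x : EuclideanSpace ℝ (Fin n) | B x ≥ 0})
    (x x' : ℝ → EuclideanSpace ℝ (Fin n))
    (hx : ∀ t : ℝ, 0 ≤ t → HasDerivAt x (x' t) t)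
    (h0 : B (x 0) ≥ 0)
    (hineq : ∀ t : ℝ, 0 ≤ t → fderiv ℝ B (x t) (x' t) ≥ -α (B (x t))) :
    ∀ t : ℝ, 0 ≤ t → x t ∉ Fail :=
  cbf_safety_filter_general B hB α hα_mono hα_zero Fail hFail x x' hx h0 hineq
end
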